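/- arXiv:1612.03443 — 2 statements merged into one kernel-verified Lean document; each statement's English description precedes it below -/
import Mathlib

section
/- Suppose φ : A → ℕ×ℤ^d is an isometry of degree m ≥ 3, and let B := {v ∈ ℕ×ℤ^d : ‖u−v‖₁ ≤ 1 for some u ∈ A} ⊇ A. Then φ can be extended to an isometry Φ : B → ℕ×ℤ^d of degree at least m−2 (i.e., Φ restricted to A equals φ). -/
open Filter MeasureTheory
open scoped BigOperators Topology ENNReal Classical

namespace DirectedPolymers

/-- The disjoint union of countably many copies of `ℤ^d`. -/
abbrev Site (d : ℕ) := ℕ × (Fin d → ℤ)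

/-- `‖u - v‖₁`: the `ℓ¹` distance within a common copy of `ℤ^d`, and `∞` across copies. -/
noncomputable def dist1 {d : ℕ} (u v : Site d) : ENat :=
  if u.1 = v.1 then ((∑ i, (u.2 i - v.2 i).natAbs : ℕ) : ENat) else ⊤

/-- `u' - v' = u - v` in `ℤ^d ∪ {∞}`: either both differences are taken in the same copy
of `ℤ^d` and agree, or both are `∞`. -/
def sameDiff {d : ℕ} (u' v' u v : Site d) : Prop :=
  (u'.1 = v'.1 ∧ u.1 = v.1 ∧ u'.2 - v'.2 = u.2 - v.2) ∨ (u'.1 ≠ v'.1 ∧ u.1 ≠ v.1)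

/-- `φ` is an isometry of degree `m` on `A`:
`φ(u) - φ(v) = u - v` whenever `‖u-v‖₁ < m` or `‖φ(u)-φ(v)‖₁ < m`. -/
def IsIsoDeg {d : ℕ} (A : Set (Site d)) (φ : Site d → Site d) (m : ENat) : Prop :=
  ∀ u ∈ A, ∀ v ∈ A, (dist1 u v < m ∨ dist1 (φ u) (φ v) < m) → sameDiff (φ u) (φ v) u v

/-- `2^{-m}`, with value `0` at `m = ∞`. -/
noncomputable def twoPowNeg (m : ENat) : ℝ :=
  if m = ⊤ then 0 else (2 : ℝ) ^ (-(m.toNat : ℤ))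

/-- The quantity `d_φ(f,g)` associated to an isometry `φ` with finite domain `A` and
degree (at least) `m`. -/
noncomputable def dPhi {d : ℕ} (A : Finset (Site d)) (φ : Site d → Site d) (m : ENat)
    (f g : Site d → ℝ) : ℝ :=
  2 * ∑ u ∈ A, |f u - g (φ u)|
    + (∑' u : {u : Site d // u ∉ A}, (f u.1) ^ 2)
    + (∑' u : {u : Site d // u ∉ A.image φ}, (g u.1) ^ 2)
    + twoPowNeg m

/-- `d(f,g)`: the infimum of `d_φ(f,g)` over all isometries `φ` with finite domain. -/
noncomputable def pdist {d : ℕ} (f g : Site d → ℝ) : ℝ :=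
  sInf { r : ℝ | ∃ (A : Finset (Site d)) (φ : Site d → Site d) (m : ENat),
    1 ≤ m ∧ IsIsoDeg (A : Set (Site d)) φ m ∧ r = dPhi A φ m f g }

/-- Membership in `S`: nonnegative subprobability mass functions on `ℕ × ℤ^d`. -/
def memS {d : ℕ} (f : Site d → ℝ) : Prop :=
  (∀ u, 0 ≤ f u) ∧ Summable f ∧ (∑' u, f u) ≤ 1


lemma dist1_coe {d : ℕ} {u v : Site d} (h : u.1 = v.1) :
    dist1 u v = ((∑ i, (u.2 i - v.2 i).natAbs : ℕ) : ENat) := if_pos h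

lemma dist1_fst_eq {d : ℕ} {u v : Site d} (h : dist1 u v ≠ ⊤) : u.1 = v.1 := by
  by_contra hne
  exact h (if_neg hne)

lemma dist1_triangle {d : ℕ} (u v w : Site d) :
    dist1 u w ≤ dist1 u v + dist1 v w := by
  by_cases h1 : u.1 = v.1
  · by_cases h2 : v.1 = w.1
    · rw [dist1_coe h1, dist1_coe h2, dist1_coe (h1.trans h2), ← Nat.cast_add,
        Nat.cast_le, ← Finset.sum_add_distrib]
      refine Finset.sum_le_sum fun i _ => ?_
      have : u.2 i - w.2 i = (u.2 i - v.2 i) + (v.2 i - w.2 i) := by ring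
      rw [this]
      exact Int.natAbs_add_le _ _
    · rw [show dist1 v w = ⊤ from if_neg h2]
      simp
  · rw [show dist1 u v = ⊤ from if_neg h1]
    simp

lemma dist1_symm {d : ℕ} (u v : Site d) : dist1 u v = dist1 v u := by
  unfold dist1
  by_cases h : u.1 = v.1
  · rw [if_pos h, if_pos h.symm]
    congr 1
    refine Finset.sum_congr rfl fun i _ => ?_
    rw [← Int.natAbs_neg]; ring_nf
  · rw [if_neg h, if_neg (Ne.symm h)]

/-- Well-definedness of the extension. -/
lemma ext_well_defined {d : ℕ} {A : Set (Site d)} {φ : Site d → Site d} {m : ENat}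
    (hm : 3 ≤ m) (hφ : IsIsoDeg A φ m) {u u' v : Site d}
    (hu : u ∈ A) (hu' : u' ∈ A) (h1 : dist1 u v ≤ 1) (h2 : dist1 u' v ≤ 1) :
    (φ u).1 = (φ u').1 ∧ (φ u).2 - u.2 = (φ u').2 - u'.2 := by
  have hlt : dist1 u u' < m := by
    calc dist1 u u' ≤ dist1 u v + dist1 v u' := dist1_triangle u v u'
    _ ≤ 1 + 1 := add_le_add h1 (by rw [dist1_symm]; exact h2)
    _ < 3 := by decide
    _ ≤ m := hm
  rcases hφ u hu u' hu' (Or.inl hlt) with ⟨hf, _, hd⟩ | ⟨_, hne⟩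
  · exact ⟨hf, sub_eq_sub_iff_sub_eq_sub.mpr hd⟩
  · exact absurd ((dist1_fst_eq (h1.trans_lt (by decide)).ne).trans
      (dist1_fst_eq (h2.trans_lt (by decide)).ne).symm) hne

lemma dist1_self {d : ℕ} (u : Site d) : dist1 u u = 0 := by
  simp [dist1]

/-- The canonical extension of `φ` to the one-step enlargement. -/
noncomputable def extendIso {d : ℕ} (A : Set (Site d)) (φ : Site d → Site d) :
    Site d → Site d := fun v =>
  if h : ∃ u ∈ A, dist1 u v ≤ 1 then
    ((φ h.choose).1, (φ h.choose).2 + (v.2 - h.choose.2))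
  else v

lemma extendIso_eq {d : ℕ} {A : Set (Site d)} {φ : Site d → Site d} {m : ENat}
    (hm : 3 ≤ m) (hφ : IsIsoDeg A φ m) {u v : Site d} (hu : u ∈ A) (h1 : dist1 u v ≤ 1) :
    extendIso A φ v = ((φ u).1, (φ u).2 + (v.2 - u.2)) := by
  have hex : ∃ u ∈ A, dist1 u v ≤ 1 := ⟨u, hu, h1⟩
  obtain ⟨e1, e2⟩ := ext_well_defined hm hφ hex.choose_spec.1 hu hex.choose_spec.2 h1
  rw [extendIso, dif_pos hex]
  refine Prod.ext e1 ?_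
  funext i
  have h := congrFun e2 i
  simp only [Pi.sub_apply, Pi.add_apply] at h ⊢
  omega

lemma dist1_extendIso {d : ℕ} {A : Set (Site d)} {φ : Site d → Site d} {m : ENat}
    (hm : 3 ≤ m) (hφ : IsIsoDeg A φ m) {u v : Site d} (hu : u ∈ A) (h1 : dist1 u v ≤ 1) :
    dist1 (φ u) (extendIso A φ v) = dist1 u v := by
  rw [extendIso_eq hm hφ hu h1]
  have huv : u.1 = v.1 := dist1_fst_eq (h1.trans_lt (by decide)).ne
  rw [dist1_coe (by simp), dist1_coe huv]
  congr 1
  refine Finset.sum_congr rfl fun i _ => ?_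
  simp only [Pi.add_apply, Pi.sub_apply]
  omega

/-- An isometry of degree `m ≥ 3` on `A` extends to an isometry of degree
at least `m - 2` on the one-step enlargement of `A`. -/
theorem isoDeg_extension {d : ℕ} (A : Set (Site d)) (φ : Site d → Site d)
    (m : ENat) (hm : 3 ≤ m) (hφ : IsIsoDeg A φ m) :
    ∃ Φ : Site d → Site d, (∀ u ∈ A, Φ u = φ u) ∧
      IsIsoDeg {v : Site d | ∃ u ∈ A, dist1 u v ≤ 1} Φ (m - 2) := by
  have h2m : (2 : ENat) ≤ m := le_trans (by decide) hm
  have hcancel : m - 2 + 2 = m := tsub_add_cancel_of_le h2m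
  refine ⟨extendIso A φ, ?_, ?_⟩
  · intro u hu
    rw [extendIso_eq hm hφ hu (by rw [dist1_self]; exact zero_le)]
    simp
  · rintro v ⟨u, hu, huv⟩ w ⟨u', hu', huw⟩ h
    have ev := extendIso_eq hm hφ hu huv
    have ew := extendIso_eq hm hφ hu' huw
    have huv1 : u.1 = v.1 := dist1_fst_eq (huv.trans_lt (by decide)).ne
    have huw1 : u'.1 = w.1 := dist1_fst_eq (huw.trans_lt (by decide)).ne
    have hmain : dist1 u u' < m ∨ dist1 (φ u) (φ u') < m := by
      rcases h with hlt | hlt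
      · left
        calc dist1 u u' ≤ dist1 u v + (dist1 v w + dist1 w u') := by
              refine (dist1_triangle u v u').trans ?_
              exact add_le_add_right (dist1_triangle v w u') _
        _ ≤ 1 + (dist1 v w + 1) := by
              refine add_le_add huv (add_le_add_right ?_ _)
              rw [dist1_symm]; exact huw
        _ = dist1 v w + 2 := by
              rw [add_comm, add_assoc]; rfl
        _ < (m - 2) + 2 := by
              exact WithTop.add_lt_add_right (by decide) hlt
        _ = m := hcancel
      · right
        calc dist1 (φ u) (φ u')
            ≤ dist1 (φ u) (extendIso A φ v)
              + (dist1 (extendIso A φ v) (extendIso A φ w)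
                 + dist1 (extendIso A φ w) (φ u')) := by
              refine (dist1_triangle (φ u) (extendIso A φ v) (φ u')).trans ?_
              exact add_le_add_right (dist1_triangle (extendIso A φ v) (extendIso A φ w) (φ u')) _
        _ ≤ 1 + (dist1 (extendIso A φ v) (extendIso A φ w) + 1) := by
              refine add_le_add ?_ (add_le_add_right ?_ _)
              · rw [dist1_extendIso hm hφ hu huv]; exact huv
              · rw [dist1_symm, dist1_extendIso hm hφ hu' huw]; exact huw
        _ = dist1 (extendIso A φ v) (extendIso A φ w) + 2 := by
              rw [add_comm, add_assoc]; rfl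
        _ < (m - 2) + 2 := WithTop.add_lt_add_right (by decide) hlt
        _ = m := hcancel
    rcases hφ u hu u' hu' hmain with ⟨hf, hf', hd⟩ | ⟨hnf, hn⟩
    · left
      refine ⟨by rw [ev, ew]; exact hf, huv1 ▸ huw1 ▸ hf', ?_⟩
      rw [ev, ew]
      funext i
      have h1 := congrFun hd i
      simp only [Pi.sub_apply, Pi.add_apply] at h1 ⊢
      omega
    · right
      refine ⟨by rw [ev, ew]; exact hnf, ?_⟩
      rw [← huv1, ← huw1]; exact hn

end DirectedPolymers
end

section
/- Two functions f, g ∈ S satisfy d(f,g) = 0 if and only if there are a set B ⊆ ℕ×ℤ^d and a map ψ : B → ℕ×ℤ^d such that: (i) f(u) = g(ψ(u)) for all u ∈ B; (ii) f(u) = 0 for all u ∉ B; (iii) g(u) = 0 for all u ∉ ψ(B); and (iv) ψ(u) − ψ(v) = u − v for all u, v ∈ B. -/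
open Filter MeasureTheory
open scoped BigOperators Topology ENNReal Classical

namespace DirectedPolymers

/-! ### Auxiliary lemmas -/

section Aux

variable {d : ℕ}

lemma twoPowNeg_nonneg (m : ENat) : 0 ≤ twoPowNeg m := by
  unfold twoPowNeg; split
  · exact le_rfl
  · positivity

lemma memS.le_one {f : Site d → ℝ} (hf : memS f) (u : Site d) : f u ≤ 1 :=
  le_trans (Summable.le_tsum hf.2.1 u fun v _ => hf.1 v) hf.2.2

lemma memS.sq_le {f : Site d → ℝ} (hf : memS f) (u : Site d) : f u ^ 2 ≤ f u := by
  nlinarith [hf.1 u, hf.le_one u]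

lemma memS.sq_summable {f : Site d → ℝ} (hf : memS f) : Summable (fun u => f u ^ 2) :=
  Summable.of_nonneg_of_le (fun u => sq_nonneg _) (fun u => hf.sq_le u) hf.2.1

lemma le_tsum_sq_of_not_mem {h : Site d → ℝ} (hsum : Summable fun u => h u ^ 2)
    {A : Finset (Site d)} {u : Site d} (hu : u ∉ A) :
    h u ^ 2 ≤ ∑' v : {v : Site d // v ∉ A}, (h v.1) ^ 2 :=
  Summable.le_tsum (hsum.subtype _) ⟨u, hu⟩ fun _ _ => sq_nonneg _

lemma tsum_sq_compl_mono {h : Site d → ℝ} (hsum : Summable fun u => h u ^ 2)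
    {s : Set (Site d)} {t : Set (Site d)} (hyp : ∀ u, u ∈ s → u ∉ t → h u = 0) :
    (∑' u : s, (h u.1) ^ 2) ≤ ∑' u : t, (h u.1) ^ 2 := by
  rw [tsum_subtype s (fun v => h v ^ 2), tsum_subtype t (fun v => h v ^ 2)]
  refine Summable.tsum_le_tsum (fun u => ?_) (hsum.indicator _) (hsum.indicator _)
  by_cases hus : u ∈ s
  · rw [Set.indicator_of_mem hus]
    by_cases hut : u ∈ t
    · rw [Set.indicator_of_mem hut]
    · rw [hyp u hus hut]; simpa using Set.indicator_nonneg (fun v _ => sq_nonneg (h v)) u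
  · rw [Set.indicator_of_notMem hus]
    exact Set.indicator_nonneg (fun v _ => sq_nonneg (h v)) u

variable {f g : Site d → ℝ}

lemma dPhi_nonneg {A : Finset (Site d)} {φ : Site d → Site d} {m : ENat} :
    0 ≤ dPhi A φ m f g := by
  unfold dPhi
  have t0 : (0:ℝ) ≤ ∑ u ∈ A, |f u - g (φ u)| := Finset.sum_nonneg fun _ _ => abs_nonneg _
  have t1 : (0:ℝ) ≤ ∑' u : {u : Site d // u ∉ A}, (f u.1) ^ 2 :=
    tsum_nonneg fun _ => sq_nonneg _
  have t2 : (0:ℝ) ≤ ∑' u : {u : Site d // u ∉ A.image φ}, (g u.1) ^ 2 :=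
    tsum_nonneg fun _ => sq_nonneg _
  linarith [twoPowNeg_nonneg m]

lemma le_dPhi_abs {A : Finset (Site d)} {φ : Site d → Site d} {m : ENat} {u : Site d}
    (hu : u ∈ A) : 2 * |f u - g (φ u)| ≤ dPhi A φ m f g := by
  unfold dPhi
  have t0 : |f u - g (φ u)| ≤ ∑ w ∈ A, |f w - g (φ w)| :=
    Finset.single_le_sum (f := fun w => |f w - g (φ w)|) (fun i _ => abs_nonneg _) hu
  have t1 : (0:ℝ) ≤ ∑' u : {u : Site d // u ∉ A}, (f u.1) ^ 2 :=
    tsum_nonneg fun _ => sq_nonneg _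
  have t2 : (0:ℝ) ≤ ∑' u : {u : Site d // u ∉ A.image φ}, (g u.1) ^ 2 :=
    tsum_nonneg fun _ => sq_nonneg _
  linarith [twoPowNeg_nonneg m]

lemma le_dPhi_f_sq (hf : memS f) {A : Finset (Site d)} {φ : Site d → Site d} {m : ENat}
    {u : Site d} (hu : u ∉ A) : f u ^ 2 ≤ dPhi A φ m f g := by
  unfold dPhi
  have t0 : (0:ℝ) ≤ ∑ u ∈ A, |f u - g (φ u)| := Finset.sum_nonneg fun _ _ => abs_nonneg _
  have t1 : f u ^ 2 ≤ ∑' u : {u : Site d // u ∉ A}, (f u.1) ^ 2 :=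
    le_tsum_sq_of_not_mem hf.sq_summable hu
  have t2 : (0:ℝ) ≤ ∑' u : {u : Site d // u ∉ A.image φ}, (g u.1) ^ 2 :=
    tsum_nonneg fun _ => sq_nonneg _
  linarith [twoPowNeg_nonneg m]

lemma le_dPhi_g_sq (hg : memS g) {A : Finset (Site d)} {φ : Site d → Site d} {m : ENat}
    {u : Site d} (hu : u ∉ A.image φ) : g u ^ 2 ≤ dPhi A φ m f g := by
  unfold dPhi
  have t0 : (0:ℝ) ≤ ∑ u ∈ A, |f u - g (φ u)| := Finset.sum_nonneg fun _ _ => abs_nonneg _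
  have t1 : (0:ℝ) ≤ ∑' u : {u : Site d // u ∉ A}, (f u.1) ^ 2 :=
    tsum_nonneg fun _ => sq_nonneg _
  have t2 : g u ^ 2 ≤ ∑' u : {u : Site d // u ∉ A.image φ}, (g u.1) ^ 2 :=
    le_tsum_sq_of_not_mem hg.sq_summable hu
  linarith [twoPowNeg_nonneg m]

lemma le_dPhi_pow {A : Finset (Site d)} {φ : Site d → Site d} {m : ENat} :
    twoPowNeg m ≤ dPhi A φ m f g := by
  unfold dPhi
  have t0 : (0:ℝ) ≤ ∑ u ∈ A, |f u - g (φ u)| := Finset.sum_nonneg fun _ _ => abs_nonneg _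
  have t1 : (0:ℝ) ≤ ∑' u : {u : Site d // u ∉ A}, (f u.1) ^ 2 :=
    tsum_nonneg fun _ => sq_nonneg _
  have t2 : (0:ℝ) ≤ ∑' u : {u : Site d // u ∉ A.image φ}, (g u.1) ^ 2 :=
    tsum_nonneg fun _ => sq_nonneg _
  linarith

lemma ultra_const {β : Type*} (U : Ultrafilter ℕ) (h : ℕ → β) {s : Set β} (hs : s.Finite)
    (hm : ∀ᶠ n in (U : Filter ℕ), h n ∈ s) : ∃ b, ∀ᶠ n in (U : Filter ℕ), h n = b := by
  have hmem : (⋃ b ∈ s, {n | h n = b}) ∈ U := by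
    refine Filter.mem_of_superset hm ?_
    intro n hn
    exact Set.mem_biUnion hn rfl
  obtain ⟨b, -, hb⟩ := (Ultrafilter.finite_biUnion_mem_iff hs).1 hmem
  exact ⟨b, hb⟩

lemma finite_level {h : Site d → ℝ} (hsum : Summable h) {c : ℝ} (hc : 0 < c) :
    {v : Site d | c < h v}.Finite := by
  have hev := Metric.tendsto_nhds.mp hsum.tendsto_cofinite_zero c hc
  refine (Filter.eventually_cofinite.mp hev).subset ?_
  intro v hv
  simp only [Set.mem_setOf_eq, Real.dist_eq, sub_zero, not_lt] at *
  exact le_trans (le_of_lt hv) (le_abs_self _)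

end Aux

/-- `d(f,g) = 0` iff there is a difference-preserving bijection between the
supports of `f` and `g` carrying `f` to `g`. -/
theorem pdist_eq_zero_iff {d : ℕ} (f g : Site d → ℝ) (hf : memS f) (hg : memS g) :
    pdist f g = 0 ↔ ∃ (B : Set (Site d)) (ψ : Site d → Site d),
      (∀ u ∈ B, f u = g (ψ u)) ∧ (∀ u ∉ B, f u = 0) ∧ (∀ u ∉ ψ '' B, g u = 0) ∧
      (∀ u ∈ B, ∀ v ∈ B, sameDiff (ψ u) (ψ v) u v) := by
  set T := { r : ℝ | ∃ (A : Finset (Site d)) (φ : Site d → Site d) (m : ENat),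
    1 ≤ m ∧ IsIsoDeg (A : Set (Site d)) φ m ∧ r = dPhi A φ m f g } with hTdef
  have hpd : pdist f g = sInf T := rfl
  have hTnonneg : ∀ r ∈ T, (0:ℝ) ≤ r := by
    rintro r ⟨A, φ', m, -, -, rfl⟩; exact dPhi_nonneg
  have hbdd : BddBelow T := ⟨0, fun r hr => hTnonneg r hr⟩
  constructor
  · -- forward direction
    intro h
    have hne : T.Nonempty := by
      refine ⟨dPhi (∅ : Finset (Site d)) id 1 f g, ∅, id, 1, le_rfl, ?_, rfl⟩
      intro u hu; simp at hu
    have hmem : ∀ ε : ℝ, 0 < ε → ∃ (A : Finset (Site d)) (φ : Site d → Site d) (m : ENat),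
        1 ≤ m ∧ IsIsoDeg (A : Set (Site d)) φ m ∧ dPhi A φ m f g < ε := by
      intro ε hε
      have hlt : sInf T < ε := by rw [← hpd, h]; exact hε
      obtain ⟨r, hr, hrε⟩ := exists_lt_of_csInf_lt hne hlt
      obtain ⟨A, φ, m, h1, h2, rfl⟩ := hr
      exact ⟨A, φ, m, h1, h2, hrε⟩
    have hseq : ∀ n : ℕ, ∃ (A : Finset (Site d)) (φ : Site d → Site d) (m : ENat),
        1 ≤ m ∧ IsIsoDeg (A : Set (Site d)) φ m ∧ dPhi A φ m f g < 1 / (n + 1) := by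
      intro n; exact hmem _ (by positivity)
    choose A φ m h1 h2 h3 using hseq
    have hsmall : ∀ δ : ℝ, 0 < δ → ∀ᶠ n : ℕ in atTop, 1 / ((n : ℝ) + 1) < δ := by
      intro δ hδ
      exact (tendsto_order.1 tendsto_one_div_add_atTop_nhds_zero_nat).2 δ hδ
    -- eventual facts
    have E1 : ∀ u : Site d, 0 < f u → ∀ᶠ n in atTop, u ∈ A n := by
      intro u hu
      filter_upwards [hsmall (f u ^ 2) (by positivity)] with n hn
      by_contra hnA
      have := le_dPhi_f_sq (g := g) hf (φ := φ n) (m := m n) hnA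
      linarith [h3 n]
    have E2 : ∀ u : Site d, 0 < f u → ∀ δ : ℝ, 0 < δ →
        ∀ᶠ n in atTop, |f u - g (φ n u)| < δ := by
      intro u hu δ hδ
      filter_upwards [E1 u hu, hsmall (2 * δ) (by positivity)] with n hA hn
      have := le_dPhi_abs (f := f) (g := g) (φ := φ n) (m := m n) hA
      linarith [h3 n]
    have E3 : ∀ k : ℕ, ∀ᶠ n in atTop, (k : ENat) < m n := by
      intro k
      filter_upwards [hsmall ((2:ℝ) ^ (-(k:ℤ))) (by positivity)] with n hn
      by_contra hcon
      push_neg at hcon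
      have hne' : m n ≠ ⊤ := ne_top_of_le_ne_top (by simp) hcon
      set j : ℕ := (m n).toNat with hjdef
      have hj : (j : ENat) = m n := ENat.coe_toNat hne'
      have hjk : j ≤ k := by
        rw [← hj] at hcon
        exact_mod_cast hcon
      have htp : twoPowNeg (m n) = (2:ℝ) ^ (-(j:ℤ)) := by
        unfold twoPowNeg
        rw [if_neg hne']
      have hle : (2:ℝ) ^ (-(k:ℤ)) ≤ (2:ℝ) ^ (-(j:ℤ)) :=
        zpow_le_zpow_right₀ one_le_two (by exact_mod_cast neg_le_neg (Int.ofNat_le.2 hjk))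
      have hpow := le_dPhi_pow (f := f) (g := g) (A := A n) (φ := φ n) (m := m n)
      rw [htp] at hpow
      linarith [h3 n]
    -- the ultrafilter
    set U : Ultrafilter ℕ := Ultrafilter.of atTop with hUdef
    have hU : ∀ {p : ℕ → Prop}, (∀ᶠ n in atTop, p n) → (∀ᶠ n in (U : Filter ℕ), p n) :=
      fun hp => Ultrafilter.of_le atTop hp
    -- define ψ as the ultrafilter limit of φ n
    have hψex : ∀ u : Site d, ∃ b, 0 < f u → ∀ᶠ n in (U : Filter ℕ), φ n u = b := by
      intro u
      by_cases hu : 0 < f u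
      · have hev : ∀ᶠ n in (U : Filter ℕ), φ n u ∈ {v : Site d | f u / 2 < g v} := by
          refine hU ?_
          filter_upwards [E2 u hu (f u / 2) (by positivity)] with n hn
          have h' := (abs_lt.1 hn).2
          show f u / 2 < g (φ n u)
          linarith
        obtain ⟨b, hb⟩ := ultra_const U (fun n => φ n u)
          (finite_level hg.2.1 (by positivity)) hev
        exact ⟨b, fun _ => hb⟩
      · exact ⟨u, fun h' => absurd h' hu⟩
    choose ψ hψ using hψex
    refine ⟨{u : Site d | 0 < f u}, ψ, ?_, ?_, ?_, ?_⟩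
    · -- f u = g (ψ u) on B
      intro u hu
      simp only [Set.mem_setOf_eq] at hu
      by_contra hnee
      have hδ : 0 < |f u - g (ψ u)| := abs_pos.2 (sub_ne_zero.2 hnee)
      obtain ⟨n, hn1, hn2⟩ := ((hU (E2 u hu _ hδ)).and (hψ u hu)).exists
      rw [hn2] at hn1
      exact lt_irrefl _ hn1
    · -- f vanishes off B
      intro u hu
      simp only [Set.mem_setOf_eq, not_lt] at hu
      exact le_antisymm hu (hf.1 u)
    · -- g vanishes off ψ '' B
      intro u hu
      by_contra hgu
      have hgupos : 0 < g u := lt_of_le_of_ne (hg.1 u) (Ne.symm hgu)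
      have himg : ∀ᶠ n in atTop, u ∈ (A n).image (φ n) := by
        filter_upwards [hsmall (g u ^ 2) (by positivity)] with n hn
        by_contra hni
        have := le_dPhi_g_sq (f := f) hg (m := m n) hni
        linarith [h3 n]
      have hvex : ∀ n : ℕ, ∃ v, u ∈ (A n).image (φ n) → v ∈ A n ∧ φ n v = u := by
        intro n
        by_cases hc : u ∈ (A n).image (φ n)
        · obtain ⟨v, hv1, hv2⟩ := Finset.mem_image.1 hc
          exact ⟨v, fun _ => ⟨hv1, hv2⟩⟩
        · exact ⟨u, fun hc' => absurd hc' hc⟩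
      choose v hv using hvex
      have hev : ∀ᶠ n in atTop, φ n (v n) = u ∧ g u / 2 < f (v n) := by
        filter_upwards [himg, hsmall (g u) hgupos] with n hn hn2
        obtain ⟨hvA, hvu⟩ := hv n hn
        refine ⟨hvu, ?_⟩
        have h2a := le_dPhi_abs (f := f) (g := g) (φ := φ n) (m := m n) hvA
        rw [hvu] at h2a
        have habs : |f (v n) - g u| < g u / 2 := by linarith [h3 n]
        linarith [(abs_lt.1 habs).1]
      have hfin := finite_level hf.2.1 (show (0:ℝ) < g u / 2 by linarith)
      have hevU : ∀ᶠ n in (U : Filter ℕ), v n ∈ {w : Site d | g u / 2 < f w} := by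
        refine hU ?_
        filter_upwards [hev] with n hn
        exact hn.2
      obtain ⟨w, hw⟩ := ultra_const U (fun n => v n) hfin hevU
      have hwB : 0 < f w := by
        obtain ⟨n, h1', h2'⟩ := (hw.and (hU hev)).exists
        rw [h1'] at h2'
        linarith [h2'.2]
      have hpsiw : ψ w = u := by
        obtain ⟨n, h1', h2', h3'⟩ := (hw.and ((hψ w hwB).and (hU hev))).exists
        rw [← h2', ← h1']
        exact h3'.1
      exact hu ⟨w, hwB, hpsiw⟩
    · -- ψ preserves differences
      intro u hu v hv
      simp only [Set.mem_setOf_eq] at hu hv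
      have main : ∀ k : ℕ, (dist1 u v = (k : ENat) ∨ dist1 (ψ u) (ψ v) = (k : ENat)) →
          sameDiff (ψ u) (ψ v) u v := by
        intro k hk
        have hev : ∀ᶠ n in atTop, u ∈ A n ∧ v ∈ A n ∧ (k : ENat) < m n :=
          (E1 u hu).and ((E1 v hv).and (E3 k))
        obtain ⟨n, ⟨hAu, hAv, hmk⟩, hψu, hψv⟩ :=
          ((hU hev).and ((hψ u hu).and (hψ v hv))).exists
        have hcond : dist1 u v < m n ∨ dist1 (φ n u) (φ n v) < m n := by
          rcases hk with hk | hk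
          · exact Or.inl (by rw [hk]; exact hmk)
          · exact Or.inr (by rw [hψu, hψv, hk]; exact hmk)
        have hsd := h2 n u (Finset.mem_coe.2 hAu) v (Finset.mem_coe.2 hAv) hcond
        rwa [hψu, hψv] at hsd
      by_cases hd : u.1 = v.1
      · exact main (∑ i, (u.2 i - v.2 i).natAbs)
          (Or.inl (by unfold dist1; rw [if_pos hd]))
      · by_cases hd' : (ψ u).1 = (ψ v).1
        · exact main (∑ i, ((ψ u).2 i - (ψ v).2 i).natAbs)
            (Or.inr (by unfold dist1; rw [if_pos hd']))
        · exact Or.inr ⟨hd', hd⟩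
  · -- backward direction
    rintro ⟨B, ψ, hBfg, hBf0, hBg0, hBiso⟩
    have key : ∀ ε : ℝ, 0 < ε → ∃ r ∈ T, r < ε := by
      intro ε hε
      obtain ⟨s₀, hs₀⟩ := ((tendsto_order.1
        (tendsto_tsum_compl_atTop_zero (fun u : Site d => f u ^ 2))).2 (ε/2)
        (by positivity)).exists
      obtain ⟨s₁, hs₁⟩ := ((tendsto_order.1
        (tendsto_tsum_compl_atTop_zero (fun u : Site d => g u ^ 2))).2 (ε/2)
        (by positivity)).exists
      have hpre : ∀ u : Site d, ∃ v, u ∈ ψ '' B → v ∈ B ∧ ψ v = u := by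
        intro u
        by_cases hc : u ∈ ψ '' B
        · obtain ⟨v, hv1, hv2⟩ := hc
          exact ⟨v, fun _ => ⟨hv1, hv2⟩⟩
        · exact ⟨u, fun hc' => absurd hc' hc⟩
      choose pre hpre using hpre
      set Af : Finset (Site d) :=
        (s₀.filter (· ∈ B)) ∪ ((s₁.filter (· ∈ ψ '' B)).image pre) with hAf
      have hAB : ∀ u ∈ Af, u ∈ B := by
        intro u hu
        rcases Finset.mem_union.1 hu with h | h
        · exact (Finset.mem_filter.1 h).2
        · obtain ⟨w, hw1, hw2⟩ := Finset.mem_image.1 h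
          have := hpre w (Finset.mem_filter.1 hw1).2
          rw [← hw2]; exact this.1
      refine ⟨dPhi Af ψ ⊤ f g, ⟨Af, ψ, ⊤, le_top, ?_, rfl⟩, ?_⟩
      · intro u hu v hv _
        exact hBiso u (hAB u (Finset.mem_coe.1 hu)) v (hAB v (Finset.mem_coe.1 hv))
      · have hsum0 : ∑ u ∈ Af, |f u - g (ψ u)| = 0 :=
          Finset.sum_eq_zero fun u hu => by rw [hBfg u (hAB u hu), sub_self, abs_zero]
        have ht1 : (∑' u : {u : Site d // u ∉ Af}, (f u.1) ^ 2)
            ≤ ∑' u : {u : Site d // u ∉ s₀}, (f u.1) ^ 2 := by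
          refine tsum_sq_compl_mono hf.sq_summable
            (s := {u : Site d | u ∉ Af}) (t := {u : Site d | u ∉ s₀}) ?_
          intro u hu hut
          simp only [Set.mem_setOf_eq, not_not] at hu hut
          by_cases hB : u ∈ B
          · exact absurd (Finset.mem_union.2 (Or.inl (Finset.mem_filter.2 ⟨hut, hB⟩))) hu
          · exact hBf0 u hB
        have ht2 : (∑' u : {u : Site d // u ∉ Af.image ψ}, (g u.1) ^ 2)
            ≤ ∑' u : {u : Site d // u ∉ s₁}, (g u.1) ^ 2 := by
          refine tsum_sq_compl_mono hg.sq_summable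
            (s := {u : Site d | u ∉ Af.image ψ}) (t := {u : Site d | u ∉ s₁}) ?_
          intro u hu hut
          simp only [Set.mem_setOf_eq, not_not] at hu hut
          by_cases hB : u ∈ ψ '' B
          · exfalso
            refine hu (Finset.mem_image.2 ⟨pre u, ?_, (hpre u hB).2⟩)
            exact Finset.mem_union.2 (Or.inr
              (Finset.mem_image.2 ⟨u, Finset.mem_filter.2 ⟨hut, hB⟩, rfl⟩))
          · exact hBg0 u hB
        have htp : twoPowNeg (⊤ : ENat) = 0 := by unfold twoPowNeg; rw [if_pos rfl]
        unfold dPhi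
        rw [hsum0, htp]
        linarith [hs₀, hs₁, ht1, ht2]
    have hne : T.Nonempty := by
      obtain ⟨r, hr, -⟩ := key 1 one_pos; exact ⟨r, hr⟩
    rw [hpd]
    refine le_antisymm ?_ (le_csInf hne fun r hr => hTnonneg r hr)
    by_contra hc
    push_neg at hc
    obtain ⟨r, hr, hrlt⟩ := key (sInf T) hc
    exact absurd (csInf_le hbdd hr) (not_le.2 hrlt)

end DirectedPolymers
end
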